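/- For any unitary U on H⊗H and ancilla |e⟩, if U(|ψ⟩⊗|e⟩)=|ψ⟩⊗|ψ⟩ and U(|φ⟩⊗|e⟩)=|φ⟩⊗|φ⟩, then ⟨ψ|φ⟩ = ⟨ψ|φ⟩², hence ⟨ψ|φ⟩ ∈ {0,1}. -/
import Mathlib


/-- Componentwise tensor product of two vectors in `ℂⁿ`. -/
noncomputable def tens {n : ℕ} (ψ φ : EuclideanSpace ℂ (Fin n)) :
    EuclideanSpace ℂ (Fin n × Fin n) :=
  (EuclideanSpace.equiv (Fin n × Fin n) ℂ).symm (fun p => ψ p.1 * φ p.2)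

lemma tens_inner {n : ℕ} (a b c d : EuclideanSpace ℂ (Fin n)) :
    inner (𝕜 := ℂ) (tens a b) (tens c d)
      = inner (𝕜 := ℂ) a c * inner (𝕜 := ℂ) b d := by
  simp only [tens, EuclideanSpace.inner_eq_star_dotProduct]
  simp [EuclideanSpace.equiv, dotProduct, Fintype.sum_prod_type,
    Finset.sum_mul_sum, mul_comm, mul_left_comm, mul_assoc]

/-- Cloning via a unitary preserves overlaps: if a unitary `U` on `H ⊗ H` with ancilla
`e` clones both `ψ` and `φ`, then `⟨ψ|φ⟩ = ⟨ψ|φ⟩²`, hence `⟨ψ|φ⟩ ∈ {0, 1}`. -/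
theorem cloning_preserves_overlap {n : ℕ}
    (ψ φ e : EuclideanSpace ℂ (Fin n))
    (hψ : ‖ψ‖ = 1) (hφ : ‖φ‖ = 1) (he : ‖e‖ = 1)
    (U : EuclideanSpace ℂ (Fin n × Fin n) ≃ₗᵢ[ℂ] EuclideanSpace ℂ (Fin n × Fin n))
    (hUψ : U (tens ψ e) = tens ψ ψ) (hUφ : U (tens φ e) = tens φ φ) :
    inner (𝕜 := ℂ) ψ φ = (inner (𝕜 := ℂ) ψ φ) ^ 2 ∧
      (inner (𝕜 := ℂ) ψ φ = 0 ∨ inner (𝕜 := ℂ) ψ φ = 1) := by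
  have hee : inner (𝕜 := ℂ) e e = 1 := by
    rw [inner_self_eq_norm_sq_to_K, he]; norm_num
  have key : inner (𝕜 := ℂ) ψ φ = (inner (𝕜 := ℂ) ψ φ) ^ 2 := by
    have h := U.inner_map_map (tens ψ e) (tens φ e)
    rw [hUψ, hUφ, tens_inner, tens_inner, hee, mul_one] at h
    rw [sq]; exact h.symm
  refine ⟨key, ?_⟩
  have : inner (𝕜 := ℂ) ψ φ * (inner (𝕜 := ℂ) ψ φ - 1) = 0 := by
    linear_combination -key
  rcases mul_eq_zero.mp this with h | h
  · exact Or.inl h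
  · exact Or.inr (sub_eq_zero.mp h)
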